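/- (Intermediate upper bound on neural fragility of a noisy system) Let A, E be real n×n matrices with ‖A‖₂ < 1 and ‖E‖₂ ≤ ε, set Â = A + E, let r be a real number that is not an eigenvalue of Â, and let k ∈ {1,…,n}. Then the neural fragility Γ_Â = (rI − Â)⁻¹e_k / (e_kᵀ(rI − Â)⁻ᵀ(rI − Â)⁻¹e_k) satisfies ‖Γ_Â‖₂ ≤ ‖(Â − rI)⁻¹‖₂ · (|r| + 1 + ε)². -/
import Mathlib

open Matrix

noncomputable def euclNorm {n : ℕ} (v : Fin n → ℝ) : ℝ :=
  ‖(EuclideanSpace.equiv (Fin n) ℝ).symm v‖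

noncomputable def matOpNorm {n : ℕ} (A : Matrix (Fin n) (Fin n) ℝ) : ℝ :=
  ‖Matrix.toEuclideanCLM (𝕜 := ℝ) A‖

lemma euclNorm_mulVec_le {n : ℕ} (A : Matrix (Fin n) (Fin n) ℝ) (x : Fin n → ℝ) :
    euclNorm (A *ᵥ x) ≤ matOpNorm A * euclNorm x := by
  have h : (EuclideanSpace.equiv (Fin n) ℝ).symm (A *ᵥ x) =
      toEuclideanCLM (𝕜 := ℝ) A ((EuclideanSpace.equiv (Fin n) ℝ).symm x) := rfl
  rw [euclNorm, h]
  exact (toEuclideanCLM (𝕜 := ℝ) A).le_opNorm _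

lemma dotProduct_self_eq {n : ℕ} (v : Fin n → ℝ) : v ⬝ᵥ v = euclNorm v ^ 2 := by
  simp only [euclNorm, EuclideanSpace.norm_eq, dotProduct]
  rw [Real.sq_sqrt (by positivity)]
  simp [sq]

lemma euclNorm_pos {n : ℕ} {v : Fin n → ℝ} (hv : v ≠ 0) : 0 < euclNorm v := by
  rw [euclNorm, norm_pos_iff]
  simpa using hv

lemma euclNorm_smul {n : ℕ} (c : ℝ) (u : Fin n → ℝ) :
    euclNorm (c • u) = |c| * euclNorm u := by
  rw [euclNorm, euclNorm, _root_.map_smul, norm_smul, Real.norm_eq_abs]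

lemma matOpNorm_mul_le {n : ℕ} (A B : Matrix (Fin n) (Fin n) ℝ) :
    matOpNorm (A * B) ≤ matOpNorm A * matOpNorm B := by
  rw [matOpNorm, _root_.map_mul]
  exact norm_mul_le _ _

set_option maxHeartbeats 1000000 in
set_option synthInstance.maxHeartbeats 400000 in
/-- Intermediate upper bound on the neural fragility of the noisy system `Â = A + E`:
`‖Γ_Â‖₂ ≤ ‖(Â − rI)⁻¹‖₂ (|r| + 1 + ε)²` when `‖A‖₂ < 1` and `‖E‖₂ ≤ ε`. -/
theorem fragility_noisy_intermediate_upper_bound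
    (n : ℕ) (hn : 1 ≤ n) (A E : Matrix (Fin n) (Fin n) ℝ) (ε : ℝ)
    (hA : matOpNorm A < 1) (hE : matOpNorm E ≤ ε)
    (r : ℝ) (hr : r ∉ spectrum ℝ (A + E)) (k : Fin n)
    (Γ : Fin n → ℝ)
    (hΓ : Γ = (Pi.single k 1 ⬝ᵥ
        ((((r • (1 : Matrix (Fin n) (Fin n) ℝ) - (A + E))⁻¹)ᵀ *
          (r • (1 : Matrix (Fin n) (Fin n) ℝ) - (A + E))⁻¹) *ᵥ Pi.single k 1))⁻¹ •
        ((r • (1 : Matrix (Fin n) (Fin n) ℝ) - (A + E))⁻¹ *ᵥ Pi.single k 1)) :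
    euclNorm Γ ≤
      matOpNorm ((A + E - r • (1 : Matrix (Fin n) (Fin n) ℝ))⁻¹) * (|r| + 1 + ε) ^ 2 := by
  haveI : Nontrivial (EuclideanSpace ℝ (Fin n)) := by
    refine ⟨0, (EuclideanSpace.equiv (Fin n) ℝ).symm (Pi.single ⟨0, hn⟩ 1), ?_⟩
    intro h
    have := congrArg (fun x => (EuclideanSpace.equiv (Fin n) ℝ) x) h
    simp at this
    exact one_ne_zero (congrFun this.symm ⟨0, hn⟩)
  set M : Matrix (Fin n) (Fin n) ℝ := r • (1 : Matrix (Fin n) (Fin n) ℝ) - (A + E) with hM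
  have hMunit : IsUnit M := by
    have := spectrum.notMem_iff.mp hr
    rwa [Algebra.algebraMap_eq_smul_one] at this
  have hdet : IsUnit M.det := (isUnit_iff_isUnit_det M).mp hMunit
  have hMl : M⁻¹ * M = 1 := nonsing_inv_mul M hdet
  have hMr : M * M⁻¹ = 1 := mul_nonsing_inv M hdet
  have hone : matOpNorm (1 : Matrix (Fin n) (Fin n) ℝ) = 1 := by
    rw [matOpNorm, _root_.map_one]
    exact norm_one
  set v : Fin n → ℝ := Pi.single k 1 with hv
  have hvnorm : euclNorm v = 1 := by
    have h : (EuclideanSpace.equiv (Fin n) ℝ).symm v = EuclideanSpace.single k (1 : ℝ) := rfl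
    rw [euclNorm, h, EuclideanSpace.norm_single]
    norm_num
  set w : Fin n → ℝ := M⁻¹ *ᵥ v with hw
  have hMw : M *ᵥ w = v := by
    rw [hw, mulVec_mulVec, hMr, one_mulVec]
  have hwne : w ≠ 0 := by
    intro h
    rw [h, mulVec_zero] at hMw
    have := congrFun hMw k
    simp [hv] at this
  have hwpos : 0 < euclNorm w := euclNorm_pos hwne
  have hc : v ⬝ᵥ (((M⁻¹)ᵀ * M⁻¹) *ᵥ v) = euclNorm w ^ 2 := by
    rw [← mulVec_mulVec, dotProduct_mulVec, vecMul_transpose, ← hw, dotProduct_self_eq]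
  have hΓnorm : euclNorm Γ = (euclNorm w)⁻¹ := by
    rw [hΓ, hc, euclNorm_smul, abs_inv, abs_of_nonneg (by positivity)]
    rw [show euclNorm (M⁻¹ *ᵥ v) = euclNorm w from rfl]
    field_simp
  have hMbound : matOpNorm M ≤ |r| + 1 + ε := by
    have heq : toEuclideanCLM (𝕜 := ℝ) M =
        r • toEuclideanCLM (𝕜 := ℝ) (1 : Matrix (Fin n) (Fin n) ℝ)
          - (toEuclideanCLM (𝕜 := ℝ) A + toEuclideanCLM (𝕜 := ℝ) E) := by
      rw [hM, map_sub, _root_.map_smul, map_add]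
    rw [matOpNorm, heq]
    have h2 := norm_sub_le (r • toEuclideanCLM (𝕜 := ℝ) (1 : Matrix (Fin n) (Fin n) ℝ))
      (toEuclideanCLM (𝕜 := ℝ) A + toEuclideanCLM (𝕜 := ℝ) E)
    have h3 := norm_add_le (toEuclideanCLM (𝕜 := ℝ) A) (toEuclideanCLM (𝕜 := ℝ) E)
    have h4 : ‖r • toEuclideanCLM (𝕜 := ℝ) (1 : Matrix (Fin n) (Fin n) ℝ)‖
        = |r| * ‖toEuclideanCLM (𝕜 := ℝ) (1 : Matrix (Fin n) (Fin n) ℝ)‖ := by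
      rw [norm_smul r (toEuclideanCLM (𝕜 := ℝ) (1 : Matrix (Fin n) (Fin n) ℝ)),
        Real.norm_eq_abs]
    have h5 : ‖toEuclideanCLM (𝕜 := ℝ) (1 : Matrix (Fin n) (Fin n) ℝ)‖ = 1 := hone
    have h6 := hA.le
    rw [matOpNorm] at h6
    rw [matOpNorm] at hE
    rw [h5, mul_one] at h4
    linarith
  have hMpos : 0 < matOpNorm M := by
    by_contra h
    push_neg at h
    have h0 : matOpNorm M = 0 := le_antisymm h (norm_nonneg _)
    have := matOpNorm_mul_le M⁻¹ M
    rw [hMl, hone, h0, mul_zero] at this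
    linarith
  have hinv1 : 1 ≤ matOpNorm M⁻¹ * matOpNorm M := by
    have := matOpNorm_mul_le M⁻¹ M
    rwa [hMl, hone] at this
  have hwb : (euclNorm w)⁻¹ ≤ matOpNorm M := by
    have h1 : euclNorm v ≤ matOpNorm M * euclNorm w := by
      rw [← hMw]; exact euclNorm_mulVec_le M w
    rw [hvnorm] at h1
    rw [inv_le_iff_one_le_mul₀ hwpos]
    linarith [mul_comm (matOpNorm M) (euclNorm w)]
  have hneg : (A + E - r • (1 : Matrix (Fin n) (Fin n) ℝ))⁻¹ = -M⁻¹ := by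
    have h1 : A + E - r • (1 : Matrix (Fin n) (Fin n) ℝ) = -M := by rw [hM, neg_sub]
    rw [h1]
    refine inv_eq_left_inv ?_
    rw [neg_mul_neg, hMl]
  have htarget : matOpNorm ((A + E - r • (1 : Matrix (Fin n) (Fin n) ℝ))⁻¹) = matOpNorm M⁻¹ := by
    rw [hneg, matOpNorm, map_neg, norm_neg, matOpNorm]
  rw [hΓnorm, htarget]
  have hεnn : 0 ≤ ε := le_trans (norm_nonneg _) hE
  calc (euclNorm w)⁻¹ ≤ matOpNorm M := hwb
    _ ≤ matOpNorm M⁻¹ * matOpNorm M * matOpNorm M := by nlinarith [hMpos]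
    _ = matOpNorm M⁻¹ * matOpNorm M ^ 2 := by ring
    _ ≤ matOpNorm M⁻¹ * (|r| + 1 + ε) ^ 2 := by
        have hMinvnn : 0 ≤ matOpNorm M⁻¹ := norm_nonneg _
        have hsq : matOpNorm M ^ 2 ≤ (|r| + 1 + ε) ^ 2 :=
          pow_le_pow_left₀ (le_of_lt hMpos) hMbound 2
        nlinarith
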